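/- arXiv:1911.01386 — 3 statements merged into one kernel-verified Lean document; each statement's English description precedes it below -/
import Mathlib

section
/- For all natural numbers k and n and every complex number x, the k-th derivative of the function z ↦ (sinh z)^n, evaluated at x, equals ((-1)^n / 2^n) · Σ_{r=0}^{n} (-1)^r · C(n,r) · (2r − n)^k · exp((2r − n)·x), where C(n,r) is the binomial coefficient. -/
/-! Expanding `sinh z = (e^z - e^(-z)) / 2` by the binomial theorem writes `sinh z ^ n` as a
linear combination of the exponentials `e^((2r - n) z)`, and differentiating `e^(a z)` just
multiplies it by `a`. -/

open Complex Finset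

theorem iteratedDeriv_sum_mul_cexp_const_mul {ι : Type*} (s : Finset ι) (c a : ι → ℂ) (k : ℕ)
    (x : ℂ) :
    iteratedDeriv k (fun z => ∑ i ∈ s, c i * exp (a i * z)) x =
      ∑ i ∈ s, c i * a i ^ k * exp (a i * x) := by
  rw [iteratedDeriv_fun_sum fun i _ => by fun_prop]
  simp only [iteratedDeriv_const_mul_field, iteratedDeriv_cexp_const_mul, mul_assoc]

theorem sinh_pow_eq_sum (n : ℕ) (z : ℂ) :
    sinh z ^ n = ((-1 : ℂ) ^ n / 2 ^ n) *
      ∑ r ∈ range (n + 1), (-1 : ℂ) ^ r * (n.choose r : ℂ) * exp ((2 * (r : ℂ) - n) * z) := by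
  have hsinh : sinh z = -(-exp z + exp (-z)) / 2 := by
    rw [← sub_eq_neg_add, neg_sub, ← two_sinh]; ring
  rw [hsinh, div_pow, neg_pow, add_pow, mul_div_right_comm, mul_sum, mul_sum]
  refine sum_congr rfl fun r hr => ?_
  have hrn : r ≤ n := mem_range_succ_iff.mp hr
  have hexp : exp z ^ r * exp (-z) ^ (n - r) = exp ((2 * (r : ℂ) - n) * z) := by
    rw [← exp_nat_mul, ← exp_nat_mul, ← exp_add, Nat.cast_sub hrn]; ring_nf
  rw [neg_pow, ← hexp]; ring

theorem iteratedDeriv_sinh_pow (k n : ℕ) (x : ℂ) :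
    iteratedDeriv k (fun z : ℂ => Complex.sinh z ^ n) x =
      ((-1 : ℂ) ^ n / 2 ^ n) *
        ∑ r ∈ Finset.range (n + 1),
          (-1 : ℂ) ^ r * (n.choose r : ℂ) * (2 * (r : ℂ) - (n : ℂ)) ^ k *
            Complex.exp ((2 * (r : ℂ) - (n : ℂ)) * x) := by
  simp_rw [sinh_pow_eq_sum, iteratedDeriv_const_mul_field, iteratedDeriv_sum_mul_cexp_const_mul]
end

section
/- For all natural numbers k and n and every real number x, the k-th derivative of the function t ↦ (cos t)^n, evaluated at x, equals (1 / 2^n) · Σ_{r=0}^{n} C(n,r) · (2r − n)^k · cos(k·π/2 + (2r − n)·x), where C(n,r) is the binomial coefficient. -/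
/-! Expanding `(2 cos t)^n = (e^{it} + e^{-it})^n` binomially and taking real parts writes `cos^n t`
as `2^{-n} ∑ C(n,r) cos((2r - n) t)`. Differentiating `cos(a + c t)` multiplies it by `c` and shifts
the phase `a` by `π/2`, so `k` derivatives of the sum give the factors `(2r - n)^k` and the phase `kπ/2`. -/

open Real Finset

theorem two_pow_mul_cos_pow (n : ℕ) (t : ℝ) :
    2 ^ n * cos t ^ n =
      ∑ r ∈ range (n + 1), (n.choose r : ℝ) * cos ((2 * r - n) * t) := by
  have hterm : ∀ r ∈ range (n + 1),
      Complex.exp (t * Complex.I) ^ r * Complex.exp (-t * Complex.I) ^ (n - r) * n.choose r =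
        n.choose r * Complex.exp (((2 * r - n : ℝ) * t : ℝ) * Complex.I) := by
    intro r hr
    have hrn : r ≤ n := Nat.lt_succ_iff.mp (mem_range.mp hr)
    rw [← Complex.exp_nat_mul, ← Complex.exp_nat_mul, ← Complex.exp_add, mul_comm]
    push_cast [Nat.cast_sub hrn]
    ring_nf
  have hcomplex := congrArg Complex.re <| calc
    (((2 * cos t) ^ n : ℝ) : ℂ) = (2 * Complex.cos t) ^ n := by push_cast; rfl
    _ = ∑ r ∈ range (n + 1),
          n.choose r * Complex.exp (((2 * r - n : ℝ) * t : ℝ) * Complex.I) := by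
      rw [Complex.two_cos, add_pow, sum_congr rfl hterm]
  simpa only [Complex.ofReal_re, Complex.re_sum, ← Complex.ofReal_natCast, Complex.re_ofReal_mul,
    Complex.exp_ofReal_mul_I_re, mul_pow] using hcomplex

theorem iteratedDeriv_sum_mul_cos {ι : Type*} (s : Finset ι) (b c : ι → ℝ) (k : ℕ) (a : ℝ) :
    iteratedDeriv k (fun t => ∑ i ∈ s, b i * cos (a + c i * t)) =
      fun t => ∑ i ∈ s, b i * c i ^ k * cos (a + k * (π / 2) + c i * t) := by
  induction k generalizing a b with
  | zero => simp
  | succ k ih =>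
    have hderiv : deriv (fun t => ∑ i ∈ s, b i * cos (a + c i * t)) =
        fun t => ∑ i ∈ s, (b i * c i) * cos (a + π / 2 + c i * t) := by
      funext t
      refine (HasDerivAt.fun_sum fun i _ => ?_).deriv
      rw [add_right_comm, cos_add_pi_div_two]
      exact (((hasDerivAt_id t).const_mul (c i)).const_add a).cos.const_mul (b i)
        |>.congr_deriv (by simp only [id, mul_one]; ring)
    have hphase : a + π / 2 + k * (π / 2) = a + (k + 1 : ℕ) * (π / 2) := by push_cast; ring
    rw [iteratedDeriv_succ', hderiv, ih]
    funext t
    refine sum_congr rfl fun i _ => ?_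
    rw [hphase, pow_succ]
    ring

theorem iteratedDeriv_real_cos_pow (k n : ℕ) (x : ℝ) :
    iteratedDeriv k (fun t : ℝ => Real.cos t ^ n) x =
      (1 / 2 ^ n : ℝ) *
        ∑ r ∈ Finset.range (n + 1),
          (n.choose r : ℝ) * (2 * (r : ℝ) - (n : ℝ)) ^ k *
            Real.cos ((k : ℝ) * (Real.pi / 2) + (2 * (r : ℝ) - (n : ℝ)) * x) := by
  have hpow : (fun t : ℝ => cos t ^ n) = fun t => (1 / 2 ^ n : ℝ) *
      ∑ r ∈ range (n + 1), (n.choose r : ℝ) * cos (0 + (2 * r - n) * t) := by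
    funext t
    simp only [zero_add, ← two_pow_mul_cos_pow]
    field_simp
  rw [hpow, iteratedDeriv_const_mul_field, iteratedDeriv_sum_mul_cos]
  simp only [zero_add]
end

section
/- For every even natural number k and every integer n there exists a polynomial P of degree at most k such that for every complex number x with sin x ≠ 0, the k-th derivative of z ↦ (sin z)^n (integer power) at x equals (sin x)^(n−k) · P(sin x); and for every odd natural number k and every integer n there exists a polynomial P of degree at most k − 1 such that for every complex number x with sin x ≠ 0, the k-th derivative of z ↦ (sin z)^n at x equals (sin x)^(n−k) · cos x · P(sin x). -/
/-!
Write `s = sin z`. The derivative of `s ^ m * P(s)` is `s ^ (m - 1) * cos z * (m P + X P')(s)`,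
and, using `cos² = 1 - s²`, the derivative of `s ^ m * cos z * P(s)` is `s ^ (m - 1) * Q(s)` with
`Q = (1 - X²)(m P + X P') - X² P`. So on the open set where `sin` does not vanish the derivatives
alternate between these two shapes, the exponent of `sin` dropping by one at each step; `X P'`
never raises the degree, and the `cos²` step raises it by two.
-/

open Polynomial

theorem Polynomial.degree_X_mul_derivative_le {R : Type*} [Semiring R] (P : R[X]) :
    (X * derivative P).degree ≤ P.degree := by
  rcases eq_or_ne P 0 with rfl | hP
  · simp
  calc (X * derivative P).degree ≤ 1 + (derivative P).degree :=
        (degree_mul_le _ _).trans (add_le_add degree_X_le le_rfl)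
    _ ≤ P.degree := by rw [add_comm]; exact Nat.WithBot.add_one_le_of_lt (degree_derivative_lt hP)

section ZpowDerivPoly

variable {R : Type*} [Ring R]

noncomputable def zpowDerivPoly (m : ℤ) (P : R[X]) : R[X] := C (m : R) * P + X * derivative P

theorem degree_zpowDerivPoly_le (m : ℤ) (P : R[X]) : (zpowDerivPoly m P).degree ≤ P.degree := by
  refine (degree_add_le _ _).trans (max_le ?_ (degree_X_mul_derivative_le P))
  calc (C (m : R) * P).degree ≤ 0 + P.degree :=
        (degree_mul_le _ _).trans (add_le_add degree_C_le le_rfl)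
    _ = P.degree := zero_add _

end ZpowDerivPoly

theorem HasDerivAt.zpow_mul_eval {𝕜 : Type*} [NontriviallyNormedField 𝕜] {u : 𝕜 → 𝕜} {u' x : 𝕜}
    (hu : HasDerivAt u u' x) (hx : u x ≠ 0) (m : ℤ) (P : 𝕜[X]) :
    HasDerivAt (fun z => u z ^ m * P.eval (u z))
      (u x ^ (m - 1) * u' * (zpowDerivPoly m P).eval (u x)) x := by
  have hpow := (hasDerivAt_zpow m (u x) (Or.inl hx)).comp x hu
  have heval := (P.hasDerivAt (u x)).comp x hu
  refine (hpow.fun_mul heval).congr_deriv ?_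
  have hsplit : u x ^ m = u x ^ (m - 1) * u x := by
    rw [← zpow_add_one₀ hx, sub_add_cancel]
  simp only [zpowDerivPoly, eval_add, eval_mul, eval_C, eval_X, Function.comp_apply, hsplit]
  ring

open Complex

noncomputable def sinZpowCosDerivPoly (m : ℤ) (P : ℂ[X]) : ℂ[X] :=
  (1 - X ^ 2) * zpowDerivPoly m P - X ^ 2 * P

theorem degree_sinZpowCosDerivPoly_le (m : ℤ) {P : ℂ[X]} {d : ℕ} (hP : P.degree ≤ d) :
    (sinZpowCosDerivPoly m P).degree ≤ (d + 2 : ℕ) := by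
  have hsq : ((X : ℂ[X]) ^ 2).degree ≤ 2 := degree_X_pow_le 2
  have hone_sub_sq : ((1 : ℂ[X]) - X ^ 2).degree ≤ 2 :=
    (degree_sub_le _ _).trans (max_le (degree_one_le.trans (by norm_num)) hsq)
  have hmul : ∀ {Q R : ℂ[X]}, Q.degree ≤ 2 → R.degree ≤ d → (Q * R).degree ≤ (d + 2 : ℕ) :=
    fun hQ hR => (degree_mul_le _ _).trans <|
      (add_le_add hQ hR).trans_eq (by rw [add_comm]; norm_cast)
  exact (degree_sub_le _ _).trans <| max_le
    (hmul hone_sub_sq ((degree_zpowDerivPoly_le m P).trans hP)) (hmul hsq hP)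

theorem hasDerivAt_sin_zpow_mul_eval {x : ℂ} (hx : sin x ≠ 0) (m : ℤ) (P : ℂ[X]) :
    HasDerivAt (fun z => sin z ^ m * P.eval (sin z))
      (sin x ^ (m - 1) * cos x * (zpowDerivPoly m P).eval (sin x)) x :=
  (hasDerivAt_sin x).zpow_mul_eval hx m P

theorem hasDerivAt_sin_zpow_mul_cos_mul_eval {x : ℂ} (hx : sin x ≠ 0) (m : ℤ) (P : ℂ[X]) :
    HasDerivAt (fun z => sin z ^ m * cos z * P.eval (sin z))
      (sin x ^ (m - 1) * (sinZpowCosDerivPoly m P).eval (sin x)) x := by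
  have hprod := (hasDerivAt_sin_zpow_mul_eval hx m P).fun_mul (hasDerivAt_cos x)
  have hsplit : sin x ^ m = sin x ^ (m - 1) * sin x := by
    rw [← zpow_add_one₀ hx, sub_add_cancel]
  refine (hprod.congr_of_eventuallyEq (Filter.Eventually.of_forall fun z => by ring)).congr_deriv ?_
  simp only [sinZpowCosDerivPoly, eval_sub, eval_mul, eval_one, eval_pow, eval_X, hsplit]
  linear_combination (sin x ^ (m - 1) * (zpowDerivPoly m P).eval (sin x)) * sin_sq_add_cos_sq x

theorem iteratedDeriv_succ_eq_of_eqOn {𝕜 F : Type*} [NontriviallyNormedField 𝕜]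
    [NormedAddCommGroup F] [NormedSpace 𝕜 F] {f g : 𝕜 → F} {g' : F} {s : Set 𝕜} {x : 𝕜} {k : ℕ}
    (hs : IsOpen s) (hfg : Set.EqOn (iteratedDeriv k f) g s) (hx : x ∈ s) (hg : HasDerivAt g g' x) :
    iteratedDeriv (k + 1) f x = g' := by
  rw [iteratedDeriv_succ]
  exact (hg.congr_of_eventuallyEq (Filter.mem_of_superset (hs.mem_nhds hx) hfg)).deriv

theorem isOpen_setOf_sin_ne_zero : IsOpen {z : ℂ | sin z ≠ 0} :=
  isOpen_ne_fun continuous_sin continuous_const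

theorem iteratedDeriv_sin_zpow_exists_poly (k : ℕ) (n : ℤ) :
    (Even k → ∃ P : Polynomial ℂ, P.degree ≤ (k : ℕ) ∧
      ∀ x : ℂ, Complex.sin x ≠ 0 →
        iteratedDeriv k (fun z : ℂ => Complex.sin z ^ n) x =
          Complex.sin x ^ (n - (k : ℤ)) * P.eval (Complex.sin x)) ∧
    (Odd k → ∃ P : Polynomial ℂ, P.degree ≤ (k - 1 : ℕ) ∧
      ∀ x : ℂ, Complex.sin x ≠ 0 →
        iteratedDeriv k (fun z : ℂ => Complex.sin z ^ n) x =
          Complex.sin x ^ (n - (k : ℤ)) * Complex.cos x * P.eval (Complex.sin x)) := by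
  induction k with
  | zero => exact ⟨fun _ => ⟨1, by simp, fun x _ => by simp⟩, fun h => absurd h (by simp)⟩
  | succ k ih =>
    have hexp : n - ((k + 1 : ℕ) : ℤ) = n - k - 1 := by push_cast; ring
    refine ⟨fun heven => ?_, fun hodd => ?_⟩
    · have hk : Odd k := by simpa [Nat.even_add_one] using heven
      obtain ⟨P, hdeg, hP⟩ := ih.2 hk
      refine ⟨sinZpowCosDerivPoly (n - k) P, ?_, fun x hx => ?_⟩
      · have hk1 : k - 1 + 2 = k + 1 := by have := hk.pos; omega
        exact (degree_sinZpowCosDerivPoly_le _ hdeg).trans_eq (by rw [hk1])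
      · rw [hexp]
        exact iteratedDeriv_succ_eq_of_eqOn isOpen_setOf_sin_ne_zero hP hx
          (hasDerivAt_sin_zpow_mul_cos_mul_eval hx _ P)
    · obtain ⟨P, hdeg, hP⟩ := ih.1 (by simpa [Nat.odd_add_one] using hodd)
      refine ⟨zpowDerivPoly (n - k) P, (degree_zpowDerivPoly_le _ P).trans hdeg, fun x hx => ?_⟩
      rw [hexp]
      exact iteratedDeriv_succ_eq_of_eqOn isOpen_setOf_sin_ne_zero hP hx
        (hasDerivAt_sin_zpow_mul_eval hx _ P)
end
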